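/- arXiv:1511.08134 — 4 statements merged into one kernel-verified Lean document; each statement's English description precedes it below -/
import Mathlib

section
/- Let X be a finite set of points in ℝⁿ, r : X → ℝ≥0 an assignment of radii, U = ⋃_{x ∈ X} B(x, r(x)), and C_U the set of centers of maximal balls in U with r_U(c) the radius of the maximal ball centered at c ∈ C_U. If f : U → ℝⁿ is a 1-Lipschitz map, then ⋃_{x ∈ X} B(f(x), r(x)) ⊆ ⋃_{c ∈ C_U} B(f(c), r_U(c)). -/
open Metric Set MeasureTheory

/-- A closed ball (possibly of zero radius) contained in `U` is *maximal in `U`*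
if it is not a proper subset of any other closed ball contained in `U`. -/
def IsMaxBall {M : Type*} [MetricSpace M] (U : Set M) (c : M) (r : ℝ) : Prop :=
  0 ≤ r ∧ Metric.closedBall c r ⊆ U ∧
    ∀ c' r', Metric.closedBall c' r' ⊆ U → ¬ Metric.closedBall c r ⊂ Metric.closedBall c' r'

/-- The central set of `U`: the set of centers of maximal balls in `U`. -/
def centralSet {M : Type*} [MetricSpace M] (U : Set M) : Set M :=
  {c | ∃ r, IsMaxBall U c r}

/-- In a nontrivial real normed space, inclusion of closed balls implies the
distance-plus-radius inequality. -/
lemma dist_add_le_of_closedBall_subset {E : Type*} [NormedAddCommGroup E] [NormedSpace ℝ E]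
    [Nontrivial E] {c c' : E} {s s' : ℝ} (hs : 0 ≤ s)
    (h : Metric.closedBall c s ⊆ Metric.closedBall c' s') : dist c c' + s ≤ s' := by
  by_cases hcc : c = c'
  · subst hcc
    obtain ⟨v, hv⟩ := exists_ne (0 : E)
    have hvn : ‖v‖ ≠ 0 := norm_ne_zero_iff.2 hv
    have hnorm : ‖s • ‖v‖⁻¹ • v‖ = s := by
      rw [norm_smul, norm_smul, norm_inv, norm_norm, inv_mul_cancel₀ hvn, mul_one,
        Real.norm_eq_abs, abs_of_nonneg hs]
    have hz : c + s • ‖v‖⁻¹ • v ∈ Metric.closedBall c s := by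
      rw [Metric.mem_closedBall, dist_self_add_left, hnorm]
    have := h hz
    rw [Metric.mem_closedBall, dist_self_add_left, hnorm] at this
    simpa using this
  · set d := dist c c' with hd
    have hdpos : 0 < d := dist_pos.2 hcc
    have hz : c + (s / d) • (c - c') ∈ Metric.closedBall c s := by
      simp only [Metric.mem_closedBall, dist_self_add_left, norm_smul, Real.norm_eq_abs,
        abs_of_nonneg (div_nonneg hs hdpos.le)]
      rw [show ‖c - c'‖ = d by rw [hd, dist_eq_norm], div_mul_cancel₀ _ hdpos.ne']
    have h2 := h hz
    rw [Metric.mem_closedBall] at h2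
    have : dist (c + (s / d) • (c - c')) c' = d + s := by
      have : c + (s / d) • (c - c') - c' = (1 + s / d) • (c - c') := by
        rw [add_smul, one_smul]; abel
      rw [dist_eq_norm, this, norm_smul, Real.norm_eq_abs,
        abs_of_nonneg (by positivity : (0:ℝ) ≤ 1 + s / d),
        show ‖c - c'‖ = d by rw [hd, dist_eq_norm], add_mul, one_mul,
        div_mul_cancel₀ _ hdpos.ne']
    linarith [this ▸ h2]

/-- Uniqueness of the radius of a maximal ball. -/
lemma IsMaxBall.radius_unique {E : Type*} [NormedAddCommGroup E] [NormedSpace ℝ E]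
    [Nontrivial E] {U : Set E} {c : E} {s t : ℝ}
    (hs : IsMaxBall U c s) (ht : IsMaxBall U c t) : s = t := by
  obtain ⟨hs0, hsU, hsmax⟩ := hs
  obtain ⟨ht0, htU, htmax⟩ := ht
  by_contra hne
  rcases lt_or_gt_of_ne hne with hlt | hlt
  · exact hsmax c t htU (Metric.closedBall_subset_closedBall hlt.le |>.ssubset_of_ne
      (fun he => hne (by
        have h1 := dist_add_le_of_closedBall_subset hs0 he.subset
        have h2 := dist_add_le_of_closedBall_subset ht0 he.ge
        simp only [dist_self, zero_add] at h1 h2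
        linarith)))
  · exact htmax c s hsU (Metric.closedBall_subset_closedBall hlt.le |>.ssubset_of_ne
      (fun he => hne (by
        have h1 := dist_add_le_of_closedBall_subset ht0 he.subset
        have h2 := dist_add_le_of_closedBall_subset hs0 he.ge
        simp only [dist_self, zero_add] at h1 h2
        linarith)))

/-- Every closed ball contained in a compact set `U` (in a nontrivial real normed space)
is contained in a maximal ball of `U`. -/
lemma exists_maxBall {E : Type*} [NormedAddCommGroup E] [NormedSpace ℝ E]
    [Nontrivial E] [ProperSpace E] {U : Set E} (hUc : IsCompact U)
    {x : E} {ρ₀ : ℝ} (hρ₀ : 0 ≤ ρ₀) (hxU : Metric.closedBall x ρ₀ ⊆ U) :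
    ∃ c s, IsMaxBall U c s ∧ Metric.closedBall x ρ₀ ⊆ Metric.closedBall c s := by
  have hUclosed : IsClosed U := hUc.isClosed
  set ρ : E → ℝ := fun c => Metric.infDist c Uᶜ with hρ
  have hUne : Uᶜ.Nonempty := by
    rw [nonempty_compl]
    exact hUc.ne_univ
  -- radius bound: for c ∈ U, closedBall c (ρ c) ⊆ U
  have hball : ∀ c ∈ U, Metric.closedBall c (ρ c) ⊆ U := fun c hc => by
    have := Metric.closedBall_infDist_compl_subset_closure (s := U) hc
    rwa [hUclosed.closure_eq] at this
  -- subset gives radius ≤ ρ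
  have hle : ∀ (c : E) (t : ℝ), Metric.closedBall c t ⊆ U → t ≤ ρ c := fun c t hsub => by
    rcases le_or_gt t 0 with ht | ht
    · exact ht.trans (Metric.infDist_nonneg)
    · refine le_of_not_gt fun hlt => ?_
      obtain ⟨y, hyU, hyd⟩ := (Metric.infDist_lt_iff hUne).1 hlt
      exact hyU (hsub (Metric.mem_closedBall'.2 hyd.le))
  -- the constraint set
  set S : Set E := {c | c ∈ U ∧ dist x c + ρ₀ ≤ ρ c} with hS
  have hxS : x ∈ S := ⟨hxU (by simpa using hρ₀), by simpa using hle x ρ₀ hxU⟩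
  have hρcont : Continuous ρ := Metric.continuous_infDist_pt Uᶜ
  have hSclosed : IsClosed S := by
    have hSeq : S = U ∩ {c | dist x c + ρ₀ ≤ ρ c} := by ext c; simp [hS, Set.mem_inter_iff]
    rw [hSeq]
    exact hUclosed.inter (isClosed_le (by fun_prop) hρcont)
  have hScomp : IsCompact S := hUc.of_isClosed_subset hSclosed fun c hc => hc.1
  obtain ⟨c, hcS, hcmax⟩ := hScomp.exists_isMaxOn ⟨x, hxS⟩ hρcont.continuousOn
  have hρc0 : 0 ≤ ρ c := Metric.infDist_nonneg
  refine ⟨c, ρ c, ⟨hρc0, hball c hcS.1, ?_⟩, ?_⟩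
  · rintro c' s' hsub' hss
    have hs'0 : 0 ≤ ρ c + dist c c' := by positivity
    have h1 : dist c c' + ρ c ≤ s' := dist_add_le_of_closedBall_subset hρc0 hss.subset
    have hc'S : c' ∈ S := by
      have hc'U : c' ∈ U := hsub' (by simp; linarith)
      refine ⟨hc'U, ?_⟩
      have h3 : s' ≤ ρ c' := hle c' s' hsub'
      have := hcS.2
      calc dist x c' + ρ₀ ≤ dist x c + dist c c' + ρ₀ := by
            linarith [dist_triangle x c c']
        _ ≤ ρ c + dist c c' := by linarith
        _ ≤ s' := by linarith
        _ ≤ ρ c' := h3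
    have h4 : ρ c' ≤ ρ c := hcmax hc'S
    have h5 : s' ≤ ρ c' := hle c' s' hsub'
    have hdn : (0:ℝ) ≤ dist c c' := dist_nonneg
    have hdist0 : dist c c' = 0 := by linarith
    have : c = c' := by rwa [dist_eq_zero] at hdist0
    subst this
    have : s' ≤ ρ c := h5.trans h4
    exact hss.ne (le_antisymm (Metric.closedBall_subset_closedBall (by linarith)) hss.subset).symm
  · exact Metric.closedBall_subset_closedBall' (by linarith [hcS.2, dist_comm x c])

/-- After a 1-Lipschitz rearrangement, the union of the original balls is contained
in the union of the rearranged maximal balls. -/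
theorem stmt_2 {n : ℕ}
    (X : Set (EuclideanSpace ℝ (Fin n))) (hX : X.Finite)
    (r : EuclideanSpace ℝ (Fin n) → ℝ) (hr : ∀ x ∈ X, 0 ≤ r x)
    (U : Set (EuclideanSpace ℝ (Fin n)))
    (hU : U = ⋃ x ∈ X, Metric.closedBall x (r x))
    (f : EuclideanSpace ℝ (Fin n) → EuclideanSpace ℝ (Fin n))
    (hf : LipschitzOnWith 1 f U)
    (rU : EuclideanSpace ℝ (Fin n) → ℝ)
    (hrU : ∀ c ∈ centralSet U, IsMaxBall U c (rU c)) :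
    (⋃ x ∈ X, Metric.closedBall (f x) (r x)) ⊆
      ⋃ c ∈ centralSet U, Metric.closedBall (f c) (rU c) := by
  intro y hy
  simp only [mem_iUnion, exists_prop] at hy ⊢
  obtain ⟨x, hxX, hy⟩ := hy
  have hrx : 0 ≤ r x := hr x hxX
  have hxball : Metric.closedBall x (r x) ⊆ U := hU ▸ subset_biUnion_of_mem (u := fun z => Metric.closedBall z (r z)) hxX
  have hxU : x ∈ U := hxball (by simpa using hrx)
  rcases subsingleton_or_nontrivial (EuclideanSpace ℝ (Fin n)) with hsub | hnt
  · -- subsingleton case: every ball is maximal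
    have hmax : IsMaxBall U x (r x) := by
      refine ⟨hrx, hxball, fun c' r' _ hss => ?_⟩
      have h1 : Metric.closedBall x (r x) = univ :=
        eq_univ_of_forall fun y => by
          rw [Subsingleton.elim y x]; exact Metric.mem_closedBall_self hrx
      rw [h1] at hss
      exact hss.not_subset (subset_univ _)
    have hxc : x ∈ centralSet U := ⟨r x, hmax⟩
    refine ⟨x, hxc, ?_⟩
    have hd : dist y (f x) = 0 := by rw [Subsingleton.elim y (f x), dist_self]
    rw [Metric.mem_closedBall, hd]
    exact (hrU x hxc).1
  · have hUcomp : IsCompact U := by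
      rw [hU]
      exact hX.isCompact_biUnion fun x _ => isCompact_closedBall x (r x)
    obtain ⟨c, s, hmax, hsub⟩ := exists_maxBall hUcomp hrx hxball
    have hcC : c ∈ centralSet U := ⟨s, hmax⟩
    have hseq : s = rU c := hmax.radius_unique (hrU c hcC)
    refine ⟨c, hcC, ?_⟩
    have hcU : c ∈ U := hmax.2.1 (by simpa using hmax.1)
    have hdxc : dist x c + r x ≤ s := by
      have := dist_add_le_of_closedBall_subset hrx hsub
      linarith
    have hfxc : dist (f x) (f c) ≤ dist x c := by
      have := hf.dist_le_mul x hxU c hcU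
      simpa using this
    rw [Metric.mem_closedBall] at hy ⊢
    calc dist y (f c) ≤ dist y (f x) + dist (f x) (f c) := dist_triangle _ _ _
      _ ≤ r x + dist x c := add_le_add hy hfxc
      _ ≤ s := by linarith
      _ = rU c := hseq
end

section
/- Let U ⊆ ℝⁿ be compact with central set C_U and maximal-ball radius function r_U : C_U → ℝ≥0. Let X ⊆ C_U be a nonempty closed set, and f : C_U → ℝⁿ a 1-Lipschitz map. Then the set U_{X,f} = ⋃_{x ∈ X} B(f(x), r_U(x)) is closed. -/
open Metric Set MeasureTheory

/-- For a compact `U ⊆ ℝⁿ`, a closed nonempty `X ⊆ C_U`, and a 1-Lipschitz map `f`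
on `C_U`, the set `U_{X,f}` is closed. -/
theorem stmt_3 {n : ℕ}
    (U : Set (EuclideanSpace ℝ (Fin n))) (hU : IsCompact U)
    (rU : EuclideanSpace ℝ (Fin n) → ℝ)
    (hrU : ∀ c ∈ centralSet U, IsMaxBall U c (rU c))
    (X : Set (EuclideanSpace ℝ (Fin n))) (hXC : X ⊆ centralSet U)
    (hXcl : IsClosed X) (hXne : X.Nonempty)
    (f : EuclideanSpace ℝ (Fin n) → EuclideanSpace ℝ (Fin n))
    (hf : LipschitzOnWith 1 f (centralSet U)) :
    IsClosed (⋃ x ∈ X, Metric.closedBall (f x) (rU x)) := by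
  rcases Nat.eq_zero_or_pos n with h0 | hn
  · subst h0
    haveI : Subsingleton (EuclideanSpace ℝ (Fin 0)) := by
      infer_instance
    haveI : DiscreteTopology (EuclideanSpace ℝ (Fin 0)) := by
      infer_instance
    exact isClosed_discrete _
  -- main case
  -- main case
  have hCU : centralSet U ⊆ U := by
    rintro c ⟨r, hr0, hrsub, -⟩
    exact hrsub (mem_closedBall_self hr0)
  have hXcomp : IsCompact X := hU.of_isClosed_subset hXcl (hXC.trans hCU)
  -- a unit vector
  set e : EuclideanSpace ℝ (Fin n) := EuclideanSpace.single ⟨0, hn⟩ (1 : ℝ) with he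
  have hne : ‖e‖ = 1 := by
    simp [he, EuclideanSpace.norm_single]
  have hdist_add : ∀ (c : EuclideanSpace ℝ (Fin n)) (t : ℝ), 0 ≤ t → dist (c + t • e) c = t := by
    intro c t ht
    rw [dist_eq_norm, add_sub_cancel_left, norm_smul, hne, mul_one,
      Real.norm_eq_abs, abs_of_nonneg ht]
  have hrU_mem : ∀ c ∈ X, rU c ∈ Icc 0 (diam U) := by
    intro c hc
    obtain ⟨h0, hsub, -⟩ := hrU c (hXC hc)
    refine ⟨h0, ?_⟩
    have hq : c + rU c • e ∈ U := hsub (by simp [mem_closedBall, hdist_add c _ h0])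
    have := dist_le_diam_of_mem hU.isBounded hq (hCU (hXC hc))
    rwa [hdist_add c _ h0] at this
  apply IsSeqClosed.isClosed
  intro u y hu huy
  simp only [mem_iUnion₂, mem_closedBall] at hu
  choose x hxX hxd using hu
  obtain ⟨p, hpX, φ, hφ, hxp⟩ := hXcomp.tendsto_subseq hxX
  obtain ⟨r, hrIcc, ψ, hψ, hrconv⟩ := (isCompact_Icc (a := (0:ℝ)) (b := diam U)).tendsto_subseq
    (fun k => hrU_mem (x (φ k)) (hxX (φ k)))
  set ξ : ℕ → EuclideanSpace ℝ (Fin n) := fun k => x (φ (ψ k)) with hξ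
  have hξX : ∀ k, ξ k ∈ X := fun k => hxX _
  have hξp : Filter.Tendsto ξ Filter.atTop (nhds p) := hxp.comp hψ.tendsto_atTop
  have huyp : Filter.Tendsto (fun k => u (φ (ψ k))) Filter.atTop (nhds y) :=
    huy.comp ((hφ.comp hψ).tendsto_atTop)
  have hfc : Filter.Tendsto (fun k => f (ξ k)) Filter.atTop (nhds (f p)) := by
    have hcont : ContinuousOn f (centralSet U) := hf.continuousOn
    have := (hcont p (hXC hpX)).tendsto
    -- squeeze via Lipschitz
    rw [tendsto_iff_dist_tendsto_zero]
    refine squeeze_zero (fun k => dist_nonneg) (fun k => ?_)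
      (by simpa using (tendsto_iff_dist_tendsto_zero.mp hξp))
    have := hf.dist_le_mul _ (hXC (hξX k)) _ (hXC hpX)
    simpa using this
  -- dist y (f p) ≤ r
  have hdyfp : dist y (f p) ≤ r := by
    have h1 : Filter.Tendsto (fun k => dist (u (φ (ψ k))) (f (ξ k))) Filter.atTop
        (nhds (dist y (f p))) := huyp.dist hfc
    exact le_of_tendsto_of_tendsto' h1 hrconv (fun k => hxd _)
  -- r ≤ rU p
  have hball : ball p r ⊆ U := by
    intro z hz
    rw [mem_ball] at hz
    have h1 : Filter.Tendsto (fun k => dist z (ξ k)) Filter.atTop (nhds (dist z p)) :=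
      tendsto_const_nhds.dist hξp
    have h2 : ∀ᶠ k in Filter.atTop, dist z (ξ k) < rU (ξ k) := by
      have := Filter.Tendsto.sub h1 hrconv
      have hlt : dist z p - r < 0 := by linarith
      have := (this.eventually_lt_const hlt)
      filter_upwards [this] with k hk
      have hk' : dist z (ξ k) - rU (ξ k) < 0 := by
        simpa [hξ, Function.comp] using hk
      linarith
    obtain ⟨k, hk⟩ := h2.exists
    exact (hrU _ (hXC (hξX k))).2.1 (mem_closedBall.mpr hk.le)
  obtain ⟨hrUp0, hrUpsub, hrUpmax⟩ := hrU p (hXC hpX)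
  have hrle : r ≤ rU p := by
    by_contra hlt
    push_neg at hlt
    set r' := (rU p + r) / 2 with hr'
    have hr'1 : rU p < r' := by rw [hr']; linarith
    have hr'2 : r' < r := by rw [hr']; linarith
    have hr'0 : 0 ≤ r' := le_of_lt (lt_of_le_of_lt hrUp0 hr'1)
    have hsub : closedBall p r' ⊆ U := fun z hz =>
      hball (lt_of_le_of_lt (mem_closedBall.mp hz) hr'2)
    refine hrUpmax p r' hsub ⟨closedBall_subset_closedBall hr'1.le, fun hcon => ?_⟩
    have : p + r' • e ∈ closedBall p (rU p) :=
      hcon (by simp [mem_closedBall, hdist_add p _ hr'0])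
    rw [mem_closedBall, hdist_add p _ hr'0] at this
    linarith
  exact mem_iUnion₂.mpr ⟨p, hpX, mem_closedBall.mpr (hdyfp.trans hrle)⟩
end

section
/- Let U ⊆ ℝⁿ be compact, X ⊆ C_U closed and nonempty, and f : C_U → ℝⁿ 1-Lipschitz. Suppose p ∈ ℝⁿ is in the closure of U_{X,f} = ⋃_{x∈X} B(f(x), r_U(x)). Then there exists x ∈ X with p ∈ B(f(x), r_U(x)); i.e., U_{X,f} is compact. -/
open Metric Set MeasureTheory

/-- Every point of the closure of `U_{X,f}` lies in one of the rearranged maximal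
balls; in particular `U_{X,f}` is compact. -/
theorem stmt_4 {n : ℕ}
    (U : Set (EuclideanSpace ℝ (Fin n))) (hU : IsCompact U)
    (rU : EuclideanSpace ℝ (Fin n) → ℝ)
    (hrU : ∀ c ∈ centralSet U, IsMaxBall U c (rU c))
    (X : Set (EuclideanSpace ℝ (Fin n))) (hXC : X ⊆ centralSet U)
    (hXcl : IsClosed X) (hXne : X.Nonempty)
    (f : EuclideanSpace ℝ (Fin n) → EuclideanSpace ℝ (Fin n))
    (hf : LipschitzOnWith 1 f (centralSet U))
    (p : EuclideanSpace ℝ (Fin n))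
    (hp : p ∈ closure (⋃ x ∈ X, Metric.closedBall (f x) (rU x))) :
    (∃ x ∈ X, p ∈ Metric.closedBall (f x) (rU x)) ∧
      IsCompact (⋃ x ∈ X, Metric.closedBall (f x) (rU x)) := by
  classical
  have hsub : centralSet U ⊆ U := by
    rintro c ⟨r, hr0, hrsub, -⟩
    exact hrsub (mem_closedBall_self hr0)
  have hXU : X ⊆ U := fun x hx => hsub (hXC hx)
  have hrnn : ∀ c ∈ centralSet U, 0 ≤ rU c := fun c hc => (hrU c hc).1
  have hcomp : IsCompact (⋃ x ∈ X, Metric.closedBall (f x) (rU x)) := by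
    by_cases hE : (Uᶜ).Nonempty
    · obtain ⟨y0, hy0⟩ := hE
      obtain ⟨x0, hx0⟩ := hXne
      have hnt : Nontrivial (EuclideanSpace ℝ (Fin n)) :=
        ⟨⟨x0, y0, fun h => hy0 (h ▸ hXU hx0)⟩⟩
      -- rU agrees with the distance-to-complement function on the central set
      have key : ∀ c ∈ centralSet U, rU c = infDist c Uᶜ := by
        intro c hc
        obtain ⟨hr0, hrsub, hmax⟩ := hrU c hc
        have hcU : c ∈ U := hrsub (mem_closedBall_self hr0)
        set d := infDist c Uᶜ with hd
        have hle : rU c ≤ d := by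
          by_contra h
          push_neg at h
          obtain ⟨y, hyU, hy⟩ := (infDist_lt_iff ⟨y0, hy0⟩).1 h
          exact hyU (hrsub (by simpa [Metric.mem_closedBall, dist_comm] using hy.le))
        have hdball : Metric.closedBall c d ⊆ U := by
          intro y hy
          by_contra hyU
          have hyU' : y ∈ Uᶜ := hyU
          have h1 : d ≤ dist c y := infDist_le_dist_of_mem hyU'
          have h2 : dist c y ≤ d := by simpa [dist_comm] using hy
          have heq : dist c y = d := le_antisymm h2 h1
          have hd0 : 0 < d := by
            rcases (infDist_nonneg : (0:ℝ) ≤ infDist c Uᶜ).lt_or_eq with h | h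
            · rw [hd]; exact h
            · exfalso
              have hcy0 : dist c y = 0 := by rw [heq, hd, ← h]
              have : y = c := by rwa [dist_comm, dist_eq_zero] at hcy0
              exact hyU (this ▸ hcU)
          obtain ⟨ε, hε, hball⟩ := Metric.isOpen_iff.1 (isOpen_compl_iff.2 hU.isClosed) y hyU'
          set t : ℝ := min (ε / (2 * d)) (1 / 2) with ht
          have ht0 : 0 < t := lt_min (div_pos hε (by linarith)) (by norm_num)
          have ht1 : t ≤ 1 / 2 := min_le_right _ _
          set y' := y + t • (c - y) with hy'
          have hyy' : dist y' y = t * d := by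
            have h3 : y' - y = t • (c - y) := by rw [hy']; abel
            rw [dist_eq_norm, h3, norm_smul, Real.norm_eq_abs, abs_of_pos ht0,
              ← dist_eq_norm, heq]
          have hcy' : dist c y' = (1 - t) * d := by
            have h3 : c - y' = (1 - t) • (c - y) := by rw [hy']; module
            rw [dist_eq_norm, h3, norm_smul, Real.norm_eq_abs,
              abs_of_pos (by linarith : (0:ℝ) < 1 - t), ← dist_eq_norm, heq]
          have hy'U : y' ∈ Uᶜ := by
            apply hball
            rw [Metric.mem_ball, hyy']
            have htd : ε / (2 * d) * d = ε / 2 := by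
              rw [div_mul_eq_mul_div, mul_comm 2 d, ← div_div, mul_div_assoc,
                div_self hd0.ne', mul_one]
            calc t * d ≤ ε / (2 * d) * d :=
                  mul_le_mul_of_nonneg_right (min_le_left _ _) hd0.le
              _ = ε / 2 := htd
              _ < ε := by linarith
          have : d ≤ (1 - t) * d := hcy' ▸ infDist_le_dist_of_mem hy'U
          nlinarith
        have hge : d ≤ rU c := by
          by_contra h
          push_neg at h
          have hdnn : (0:ℝ) ≤ d := by rw [hd]; exact infDist_nonneg
          obtain ⟨z, hz⟩ : (Metric.sphere c d).Nonempty :=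
            NormedSpace.sphere_nonempty.2 hdnn
          refine hmax c d hdball
            (Set.ssubset_iff_subset_ne.2
              ⟨Metric.closedBall_subset_closedBall hle, fun hEq => ?_⟩)
          have hz1 : z ∈ Metric.closedBall c d := by
            rw [Metric.mem_closedBall]
            rw [Metric.mem_sphere] at hz
            exact hz.le
          rw [← hEq] at hz1
          rw [Metric.mem_closedBall] at hz1
          rw [Metric.mem_sphere] at hz
          linarith
        exact le_antisymm hle hge
      have hrcont : ContinuousOn rU X := by
        apply ContinuousOn.congr ((continuous_infDist_pt (Uᶜ)).continuousOn)
        intro x hx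
        exact key x (hXC hx)
      have hfcont : ContinuousOn f X := (hf.continuousOn).mono hXC
      have hXcomp : IsCompact X := hU.of_isClosed_subset hXcl hXU
      set φ : (EuclideanSpace ℝ (Fin n)) × (EuclideanSpace ℝ (Fin n)) →
          EuclideanSpace ℝ (Fin n) := fun q => f q.1 + rU q.1 • q.2 with hφ
      set K := X ×ˢ Metric.closedBall (0 : EuclideanSpace ℝ (Fin n)) 1 with hK
      have hKcomp : IsCompact K := hXcomp.prod (isCompact_closedBall _ _)
      have hφcont : ContinuousOn φ K := by
        apply ContinuousOn.add
        · exact hfcont.comp continuousOn_fst (fun q hq => hq.1)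
        · exact ContinuousOn.smul
            (hrcont.comp continuousOn_fst (fun q hq => hq.1)) continuousOn_snd
      have himg : φ '' K = ⋃ x ∈ X, Metric.closedBall (f x) (rU x) := by
        apply Set.Subset.antisymm
        · rintro - ⟨⟨x, v⟩, ⟨hx, hv⟩, rfl⟩
          refine Set.mem_biUnion hx ?_
          have hφv : φ (x, v) = f x + rU x • v := by rw [hφ]
          rw [Metric.mem_closedBall, hφv, dist_eq_norm]
          have h2 : f x + rU x • v - f x = rU x • v := by abel
          rw [h2, norm_smul, Real.norm_eq_abs, abs_of_nonneg (hrnn x (hXC hx))]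
          have hv1 : ‖v‖ ≤ 1 := by
            simpa [Metric.mem_closedBall, dist_eq_norm] using hv
          calc rU x * ‖v‖ ≤ rU x * 1 :=
                mul_le_mul_of_nonneg_left hv1 (hrnn x (hXC hx))
            _ = rU x := mul_one _
        · rintro q hq
          simp only [Set.mem_iUnion] at hq
          obtain ⟨x, hx, hq⟩ := hq
          rw [Metric.mem_closedBall, dist_eq_norm] at hq
          rcases eq_or_lt_of_le (hrnn x (hXC hx)) with h0 | h0
          · have h00 : rU x = 0 := h0.symm
            have hq0 : q = f x := by
              have h1 : ‖q - f x‖ ≤ 0 := h00 ▸ hq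
              have h2 := le_antisymm h1 (norm_nonneg _)
              rwa [norm_eq_zero, sub_eq_zero] at h2
            refine ⟨(x, 0), ⟨hx, by simp⟩, ?_⟩
            have hφv : φ (x, 0) = f x + rU x • (0 : EuclideanSpace ℝ (Fin n)) := by rw [hφ]
            rw [hφv, hq0]
            simp
          · refine ⟨(x, (rU x)⁻¹ • (q - f x)), ⟨hx, ?_⟩, ?_⟩
            · simp only [Metric.mem_closedBall, dist_eq_norm, sub_zero, norm_smul,
                Real.norm_eq_abs, abs_of_pos (inv_pos.2 h0)]
              rw [inv_mul_le_iff₀ h0, mul_one]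
              exact hq
            · have hφv : φ (x, (rU x)⁻¹ • (q - f x)) =
                  f x + rU x • (rU x)⁻¹ • (q - f x) := by rw [hφ]
              rw [hφv, smul_smul, mul_inv_cancel₀ h0.ne', one_smul]
              abel
      rw [← himg]
      exact hKcomp.image_of_continuousOn hφcont
    · rw [Set.not_nonempty_iff_eq_empty, Set.compl_empty_iff] at hE
      have hss : ¬ Nontrivial (EuclideanSpace ℝ (Fin n)) := by
        intro h
        exact (NormedSpace.noncompactSpace ℝ
          (EuclideanSpace ℝ (Fin n))).noncompact_univ (hE ▸ hU)
      have : Subsingleton (EuclideanSpace ℝ (Fin n)) :=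
        not_nontrivial_iff_subsingleton.1 hss
      have : Finite (EuclideanSpace ℝ (Fin n)) := Finite.of_subsingleton
      exact (Set.toFinite _).isCompact
  refine ⟨?_, hcomp⟩
  have hcl : closure (⋃ x ∈ X, Metric.closedBall (f x) (rU x)) =
      ⋃ x ∈ X, Metric.closedBall (f x) (rU x) := hcomp.isClosed.closure_eq
  rw [hcl] at hp
  simpa using hp
end

section
/- Let U ⊆ ℝⁿ be a compact set that is the union of finitely many closed balls of positive radius. Then every point of U lies in some maximal ball of U; equivalently, U = ⋃_{c ∈ C_U} B(c, r_U(c)). -/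
open Metric Set MeasureTheory

section Aux

variable {E : Type*} [NormedAddCommGroup E] [NormedSpace ℝ E]

/-- If a closed ball is contained in `U` and `Uᶜ` is nonempty, the radius
is at most the distance from the center to `Uᶜ`. -/
lemma radius_le_infDist {U : Set E} (hne : Uᶜ.Nonempty) {c : E} {s : ℝ}
    (h : Metric.closedBall c s ⊆ U) : s ≤ Metric.infDist c Uᶜ := by
  haveI := hne.coe_sort
  rw [Metric.infDist_eq_iInf]
  refine le_ciInf fun y => ?_
  by_contra hlt
  push_neg at hlt
  exact y.2 (h (by simpa [Metric.mem_closedBall, dist_comm] using hlt.le))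

/-- If `U` is closed, the closed ball of radius `infDist c Uᶜ` around a point
`c ∈ U` is contained in `U`. -/
lemma closedBall_infDist_subset {U : Set E} (hU : IsClosed U) {c : E} (hc : c ∈ U) :
    Metric.closedBall c (Metric.infDist c Uᶜ) ⊆ U := by
  intro y hy
  by_contra hyU
  have hyc : y ≠ c := by rintro rfl; exact hyU hc
  have hd : 0 < dist y c := dist_pos.mpr hyc
  have hdle : dist y c ≤ Metric.infDist c Uᶜ := hy
  obtain ⟨ε, hε, hball⟩ := Metric.isOpen_iff.mp hU.isOpen_compl y hyU
  set t := min (ε / (2 * dist y c)) 1 with ht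
  have ht0 : 0 < t := lt_min (by positivity) one_pos
  have ht1 : t ≤ 1 := min_le_right _ _
  set y' := y + t • (c - y) with hy'
  have h1 : dist y' y = t * dist y c := by
    rw [dist_eq_norm, hy']
    simp only [add_sub_cancel_left, norm_smul, Real.norm_eq_abs, abs_of_pos ht0]
    rw [dist_eq_norm, norm_sub_rev]
  have h2 : dist c y' = (1 - t) * dist c y := by
    have : c - y' = (1 - t) • (c - y) := by
      rw [hy']; module
    rw [dist_eq_norm, this, norm_smul, Real.norm_eq_abs, abs_of_nonneg (by linarith),
      dist_eq_norm]
  have hy'U : y' ∈ Uᶜ := by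
    apply hball
    rw [Metric.mem_ball, h1]
    calc t * dist y c ≤ (ε / (2 * dist y c)) * dist y c := by
          apply mul_le_mul_of_nonneg_right (min_le_left _ _) hd.le
      _ = ε / 2 := by field_simp
      _ < ε := by linarith
  have hle : Metric.infDist c Uᶜ ≤ dist c y' := Metric.infDist_le_dist_of_mem hy'U
  rw [h2, dist_comm c y] at hle
  nlinarith

/-- In a nontrivial normed space, a closed ball of nonnegative radius contained in
another closed ball gives the distance/radius inequality. -/
lemma dist_add_radius_le [Nontrivial E] {c c' : E} {s s' : ℝ} (hs : 0 ≤ s)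
    (h : Metric.closedBall c s ⊆ Metric.closedBall c' s') : dist c c' + s ≤ s' := by
  by_cases hcc : c = c'
  · subst hcc
    obtain ⟨z, hz⟩ := (NormedSpace.sphere_nonempty (x := c) (r := s)).mpr hs
    have h2 : dist z c ≤ s' := h (Metric.sphere_subset_closedBall hz)
    rw [Metric.mem_sphere.mp hz] at h2
    simpa using h2
  · set v := c - c' with hv
    have hvne : v ≠ 0 := sub_ne_zero.mpr hcc
    have hvnorm : 0 < ‖v‖ := norm_pos_iff.mpr hvne
    set z := c + (s / ‖v‖) • v with hz
    have hzc : dist z c = s := by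
      rw [dist_eq_norm, hz]
      simp only [add_sub_cancel_left, norm_smul, Real.norm_eq_abs,
        abs_of_nonneg (div_nonneg hs hvnorm.le)]
      exact div_mul_cancel₀ s hvnorm.ne'
    have hzmem : z ∈ Metric.closedBall c' s' := h (by rw [Metric.mem_closedBall, hzc])
    have hzc' : dist z c' = dist c c' + s := by
      have : z - c' = (1 + s / ‖v‖) • v := by rw [hz, hv]; module
      rw [dist_eq_norm, this, norm_smul, Real.norm_eq_abs,
        abs_of_nonneg (by positivity), dist_eq_norm, ← hv]
      field_simp
    rw [Metric.mem_closedBall, hzc'] at hzmem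
    exact hzmem

end Aux

/-- A finite union of closed balls of positive radius is the union of its
maximal balls. -/
theorem stmt_11 {n k : ℕ}
    (p : Fin k → EuclideanSpace ℝ (Fin n)) (r : Fin k → ℝ)
    (hrpos : ∀ i, 0 < r i)
    (U : Set (EuclideanSpace ℝ (Fin n)))
    (hU : U = ⋃ i, Metric.closedBall (p i) (r i))
    (rU : EuclideanSpace ℝ (Fin n) → ℝ)
    (hrU : ∀ c ∈ centralSet U, IsMaxBall U c (rU c)) :
    U = ⋃ c ∈ centralSet U, Metric.closedBall c (rU c) := by
  have hUc : IsCompact U := by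
    rw [hU]; exact isCompact_iUnion fun i => isCompact_closedBall _ _
  have hUcl : IsClosed U := hUc.isClosed
  apply Subset.antisymm
  · intro x hx
    have hx' := hx
    rw [hU, mem_iUnion] at hx'
    obtain ⟨i, hxi⟩ := hx'
    have hball_i : Metric.closedBall (p i) (r i) ⊆ U := by
      rw [hU]; exact subset_iUnion (fun j => Metric.closedBall (p j) (r j)) i
    rcases subsingleton_or_nontrivial (EuclideanSpace ℝ (Fin n)) with hs | hn
    · -- subsingleton case
      have hmax : IsMaxBall U x (r i) := by
        refine ⟨(hrpos i).le, ?_, ?_⟩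
        · intro y _
          have : y = x := Subsingleton.elim y x
          rw [this]; exact hx
        · intro c' r' _ hss
          obtain ⟨y, hy1, hy2⟩ := exists_of_ssubset hss
          exact hy2 (by
            have : y = x := Subsingleton.elim y x
            rw [this]; exact Metric.mem_closedBall_self (hrpos i).le)
      have hc : x ∈ centralSet U := ⟨_, hmax⟩
      exact mem_biUnion hc (Metric.mem_closedBall_self (hrU x hc).1)
    · -- nontrivial case
      have hne : Uᶜ.Nonempty := by
        rw [nonempty_compl]
        intro h
        obtain ⟨C, hC⟩ := hUc.isBounded.subset_closedBall 0
        obtain ⟨v, hv⟩ := (NormedSpace.sphere_nonempty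
          (x := (0 : EuclideanSpace ℝ (Fin n))) (r := |C| + 1)).mpr (by positivity)
        have hvU : v ∈ U := h ▸ mem_univ v
        have h1 := hC hvU
        rw [Metric.mem_closedBall] at h1
        rw [Metric.mem_sphere] at hv
        rw [hv] at h1
        have := le_abs_self C
        linarith
      set K := {c : EuclideanSpace ℝ (Fin n) | c ∈ U ∧ dist x c ≤ Metric.infDist c Uᶜ}
        with hK
      have hKcl : IsClosed K := by
        apply IsClosed.inter hUcl
        exact isClosed_le (Continuous.dist continuous_const continuous_id)
          (Metric.continuous_infDist_pt Uᶜ)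
      have hKcomp : IsCompact K := hUc.of_isClosed_subset hKcl fun c hc => hc.1
      have hpiK : p i ∈ K := by
        constructor
        · exact hball_i (Metric.mem_closedBall_self (hrpos i).le)
        · exact le_trans hxi (radius_le_infDist hne hball_i)
      obtain ⟨c, hcK, hcmax⟩ := hKcomp.exists_isMaxOn ⟨p i, hpiK⟩
        (Metric.continuous_infDist_pt Uᶜ).continuousOn
      set d := Metric.infDist c Uᶜ with hd
      have hd_ge : r i ≤ d := le_trans (radius_le_infDist hne hball_i) (hcmax hpiK)
      have hdpos : 0 < d := lt_of_lt_of_le (hrpos i) hd_ge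
      have hsub : Metric.closedBall c d ⊆ U := closedBall_infDist_subset hUcl hcK.1
      have hxc : x ∈ Metric.closedBall c d := hcK.2
      have hmax : IsMaxBall U c d := by
        refine ⟨hdpos.le, hsub, ?_⟩
        intro c' s' hsub' hss
        have hsubset := hss.subset
        have hkey : dist c c' + d ≤ s' := dist_add_radius_le hdpos.le hsubset
        have hs'0 : 0 ≤ s' := by
          have := hsubset (Metric.mem_closedBall_self hdpos.le)
          exact le_trans dist_nonneg this
        have hs'le : s' ≤ Metric.infDist c' Uᶜ := radius_le_infDist hne hsub'
        have hc'K : c' ∈ K := by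
          constructor
          · exact hsub' (Metric.mem_closedBall_self hs'0)
          · exact le_trans (le_trans (hsubset hxc) hs'le) (le_refl _)
        have : Metric.infDist c' Uᶜ ≤ d := hcmax hc'K
        have hceq : c = c' := dist_le_zero.mp (by linarith)
        have hseq : s' = d := by
          subst hceq
          have h0 : (0:ℝ) ≤ dist c c := dist_nonneg
          linarith
        exact hss.ne (by rw [hceq, hseq])
      have hcC : c ∈ centralSet U := ⟨d, hmax⟩
      have hmaxrU := hrU c hcC
      have hdle : d ≤ rU c := by
        by_contra hlt
        push_neg at hlt
        apply hmaxrU.2.2 c d hsub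
        constructor
        · exact Metric.closedBall_subset_closedBall hlt.le
        · intro hsub2
          obtain ⟨z, hz⟩ := (NormedSpace.sphere_nonempty (x := c) (r := d)).mpr hdpos.le
          have hz1 : z ∈ Metric.closedBall c d := Metric.sphere_subset_closedBall hz
          have hz2 := hsub2 hz1
          rw [Metric.mem_closedBall, Metric.mem_sphere.mp hz] at hz2
          linarith
      exact mem_biUnion hcC (Metric.mem_closedBall.mpr (le_trans hxc hdle))
  · intro y hy
    simp only [mem_iUnion, exists_prop] at hy
    obtain ⟨c, hc, hyc⟩ := hy
    exact (hrU c hc).2.1 hyc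
end
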